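/- (Greedy-policy performance loss in a BAMDP, Proposition 2.) Let V = (V_1, ..., V_{H+1}) with V_{H+1} ≡ 0 be an arbitrary value function on hyperstates of a finite BAMDP, and let π_{h,V} be the greedy policy with respect to V_{h+1}: π_{h,V}(x) = argmax_a [R(x,a) + Σ_{θ,s'} T_θ(s'|s,a) p(θ) V_{h+1}(x')], where x = ⟨s,p⟩ and x' = ⟨s', B(p,s,a,s')⟩. If for all h ∈ [H], all s ∈ S, and all epistemic states p, q we have |V^⋆_h(⟨s,p⟩) − V_h(⟨s,q⟩)| ≤ ε, then for every h, ||V^⋆_h − V^{π_{·,V}}_h||_∞ ≤ 2ε(H − h + 1). -/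
import Mathlib


/-- Proposition 2: greedy-policy performance loss in a finite BAMDP. If an arbitrary
value function `V` is uniformly `ε`-close to the optimal BAMDP value function (across
epistemic states), then the greedy policy with respect to `V` has value within
`2ε(H − h + 1)` of optimal. -/
theorem stmt7 {S A Θ P : Type*} [Fintype S] [Fintype A] [Nonempty A] [Fintype Θ]
    [Fintype P]
    (H : ℕ) (ε : ℝ)
    (R : S → A → ℝ) (T : Θ → S → A → S → ℝ)
    (dist : P → Θ → ℝ) (B : P → S → A → S → P)
    (hR0 : ∀ s a, 0 ≤ R s a) (hR1 : ∀ s a, R s a ≤ 1)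
    (hT0 : ∀ θ s a s', 0 ≤ T θ s a s') (hT1 : ∀ θ s a, ∑ s', T θ s a s' = 1)
    (hd0 : ∀ p θ, 0 ≤ dist p θ) (hd1 : ∀ p, ∑ θ, dist p θ = 1)
    (Vstar : ℕ → S × P → ℝ)
    (hVstarterm : ∀ x, Vstar (H + 1) x = 0)
    (hVstar : ∀ h, 1 ≤ h → h ≤ H → ∀ s p, Vstar h (s, p) =
      Finset.univ.sup' Finset.univ_nonempty (fun a =>
        R s a + ∑ θ, ∑ s', T θ s a s' * dist p θ * Vstar (h + 1) (s', B p s a s')))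
    -- the arbitrary value function V (with terminal value zero)
    (V : ℕ → S × P → ℝ)
    (hVterm : ∀ x, V (H + 1) x = 0)
    -- π is the greedy policy with respect to V
    (π : ℕ → S × P → A)
    (hgreedy : ∀ h, 1 ≤ h → h ≤ H → ∀ s p a,
      R s a + ∑ θ, ∑ s', T θ s a s' * dist p θ * V (h + 1) (s', B p s a s') ≤
        R s (π h (s, p)) + ∑ θ, ∑ s', T θ s (π h (s, p)) s' * dist p θ *
          V (h + 1) (s', B p s (π h (s, p)) s'))
    -- Vπ is the value function of the greedy policy π
    (Vπ : ℕ → S × P → ℝ)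
    (hVπterm : ∀ x, Vπ (H + 1) x = 0)
    (hVπ : ∀ h, 1 ≤ h → h ≤ H → ∀ s p, Vπ h (s, p) =
      R s (π h (s, p)) + ∑ θ, ∑ s', T θ s (π h (s, p)) s' * dist p θ *
        Vπ (h + 1) (s', B p s (π h (s, p)) s'))
    -- uniform ε-closeness across epistemic states
    (hclose : ∀ h, 1 ≤ h → h ≤ H → ∀ s (p q : P),
      |Vstar h (s, p) - V h (s, q)| ≤ ε) :
    ∀ h, 1 ≤ h → h ≤ H → ∀ x : S × P,
      |Vstar h x - Vπ h x| ≤ 2 * ε * ((H : ℝ) - h + 1) := by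

  have hsum1 : ∀ (s : S) (a : A) (p : P),
      ∑ θ, ∑ s', T θ s a s' * dist p θ = 1 := by
    intro s a p
    have h1 : ∀ θ : Θ, ∑ s', T θ s a s' * dist p θ = dist p θ := by
      intro θ
      rw [← Finset.sum_mul, hT1, one_mul]
    simp_rw [h1]
    exact hd1 p
  have hmono : ∀ (s : S) (a : A) (p : P) (f g : S → P → ℝ) (c : ℝ),
      (∀ s' q, f s' q ≤ g s' q + c) →
      ∑ θ, ∑ s', T θ s a s' * dist p θ * f s' (B p s a s') ≤
      (∑ θ, ∑ s', T θ s a s' * dist p θ * g s' (B p s a s')) + c := by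
    intro s a p f g c hfg
    have h1 : ∑ θ, ∑ s', T θ s a s' * dist p θ * f s' (B p s a s') ≤
        ∑ θ, ∑ s', T θ s a s' * dist p θ * (g s' (B p s a s') + c) := by
      refine Finset.sum_le_sum fun θ _ => Finset.sum_le_sum fun s' _ => ?_
      exact mul_le_mul_of_nonneg_left (hfg s' _) (mul_nonneg (hT0 _ _ _ _) (hd0 _ _))
    refine h1.trans_eq ?_
    have h2 : ∀ (θ : Θ) (s' : S), T θ s a s' * dist p θ * (g s' (B p s a s') + c)
        = T θ s a s' * dist p θ * g s' (B p s a s') + T θ s a s' * dist p θ * c := by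
      intro θ s'; ring
    have h3 : ∑ θ, ∑ s', T θ s a s' * dist p θ * c = c := by
      have h4 : ∀ θ : Θ, ∑ s', T θ s a s' * dist p θ * c = dist p θ * c := by
        intro θ
        rw [← Finset.sum_mul, ← Finset.sum_mul, hT1, one_mul]
      simp_rw [h4, ← Finset.sum_mul, hd1, one_mul]
    simp_rw [h2, Finset.sum_add_distrib]
    rw [h3]
  intro h0 hh01 hh0H x
  obtain ⟨s0, p0⟩ := x
  have hε : 0 ≤ ε := (abs_nonneg _).trans (hclose h0 hh01 hh0H s0 p0 p0)
  have key : ∀ n h, h + n = H + 1 → 1 ≤ h → ∀ s p,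
      |Vstar h (s, p) - Vπ h (s, p)| ≤ 2 * ε * ((H : ℝ) - h + 1) := by
    intro n
    induction n with
    | zero =>
      intro h hn hh1 s p
      have hh : h = H + 1 := by omega
      subst hh
      rw [hVstarterm, hVπterm]
      have he : 2 * ε * ((H : ℝ) - (H + 1 : ℕ) + 1) = 0 := by push_cast; ring
      rw [he]
      simp
    | succ n ih =>
      intro h hn hh1 s p
      have hhH : h ≤ H := by omega
      have ihb : ∀ s' q, |Vstar (h+1) (s', q) - Vπ (h+1) (s', q)| ≤ 2*ε*((H:ℝ) - h) := by
        intro s' q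
        have h3 := ih (h+1) (by omega) (by omega) s' q
        have e : 2*ε*((H:ℝ) - (h+1:ℕ) + 1) = 2*ε*((H:ℝ) - h) := by push_cast; ring
        rwa [e] at h3
      have hcl : ∀ s' q, |Vstar (h+1) (s', q) - V (h+1) (s', q)| ≤ ε := by
        intro s' q
        rcases Nat.lt_or_ge h H with hlt | hge
        · exact hclose (h+1) (by omega) (by omega) s' q q
        · have hh : h = H := by omega
          subst hh
          rw [hVstarterm, hVterm]
          simpa using hε
      set πa := π h (s, p) with hπa
      have s3 : ∑ θ, ∑ s', T θ s πa s' * dist p θ * V (h+1) (s', B p s πa s') ≤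
          (∑ θ, ∑ s', T θ s πa s' * dist p θ * Vstar (h+1) (s', B p s πa s')) + ε :=
        hmono s πa p (fun s' q => V (h+1) (s', q)) (fun s' q => Vstar (h+1) (s', q)) ε
          (fun s' q => by have := abs_le.mp (hcl s' q); linarith [this.1, this.2])
      have s4 : ∑ θ, ∑ s', T θ s πa s' * dist p θ * Vstar (h+1) (s', B p s πa s') ≤
          (∑ θ, ∑ s', T θ s πa s' * dist p θ * Vπ (h+1) (s', B p s πa s')) + 2*ε*((H:ℝ) - h) :=
        hmono s πa p (fun s' q => Vstar (h+1) (s', q)) (fun s' q => Vπ (h+1) (s', q)) _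
          (fun s' q => by have := abs_le.mp (ihb s' q); linarith [this.1, this.2])
      have s5 : ∑ θ, ∑ s', T θ s πa s' * dist p θ * Vπ (h+1) (s', B p s πa s') ≤
          (∑ θ, ∑ s', T θ s πa s' * dist p θ * Vstar (h+1) (s', B p s πa s')) + 2*ε*((H:ℝ) - h) :=
        hmono s πa p (fun s' q => Vπ (h+1) (s', q)) (fun s' q => Vstar (h+1) (s', q)) _
          (fun s' q => by have := abs_le.mp (ihb s' q); linarith [this.1, this.2])
      have ering : 2*ε*((H:ℝ) - h + 1) = 2*ε*((H:ℝ) - h) + 2*ε := by ring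
      have hub : Vstar h (s, p) ≤ Vπ h (s, p) + 2*ε*((H:ℝ) - h + 1) := by
        rw [hVstar h hh1 hhH, hVπ h hh1 hhH]
        apply Finset.sup'_le
        intro a _
        have s1 : ∑ θ, ∑ s', T θ s a s' * dist p θ * Vstar (h+1) (s', B p s a s') ≤
            (∑ θ, ∑ s', T θ s a s' * dist p θ * V (h+1) (s', B p s a s')) + ε :=
          hmono s a p (fun s' q => Vstar (h+1) (s', q)) (fun s' q => V (h+1) (s', q)) ε
            (fun s' q => by have := abs_le.mp (hcl s' q); linarith [this.1, this.2])
        have s2 := hgreedy h hh1 hhH s p a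
        rw [← hπa] at s2
        linarith
      have hlb : Vπ h (s, p) ≤ Vstar h (s, p) + 2*ε*((H:ℝ) - h + 1) := by
        have h6 : (fun a => R s a + ∑ θ, ∑ s', T θ s a s' * dist p θ *
            Vstar (h + 1) (s', B p s a s')) πa ≤
            Finset.univ.sup' Finset.univ_nonempty (fun a =>
              R s a + ∑ θ, ∑ s', T θ s a s' * dist p θ * Vstar (h + 1) (s', B p s a s')) :=
          Finset.le_sup' (fun a => R s a + ∑ θ, ∑ s', T θ s a s' * dist p θ * Vstar (h + 1) (s', B p s a s')) (Finset.mem_univ πa)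
        rw [← hVstar h hh1 hhH] at h6
        simp only at h6
        rw [hVπ h hh1 hhH, ← hπa]
        linarith
      rw [abs_sub_le_iff]
      constructor <;> linarith
  exact key (H + 1 - h0) h0 (by omega) hh01 s0 p0
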